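/- Let k be a finite field of cardinality p^f and let S = k[[u]] be equipped with the Frobenius ring endomorphism φ sending u to u^p and acting as x ↦ x^p on k. For any nonzero finite-length S-module N, the base change φ*(N) = S ⊗_{φ,S} N has strictly greater length as a Z_p-module (equivalently, strictly greater dimension as an F_p-vector space) than N. -/

import Mathlib

/-
The Frobenius lift `φ` is coefficientwise Frobenius followed by `u ↦ u ^ p`, so `φ g` only has
coefficients in degrees divisible by `p`, namely the `p`-th powers of those of `g`. Splitting a
power series according to the residues of its exponents mod `p`, and taking `p`-th roots of the
coefficients in the perfect field `k`, shows that `k⟦u⟧` is free over itself via `φ` with basis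
`1, u, …, u ^ (p - 1)`. Hence `φ*(N) ≅ N ^ p`, whose cardinality `#N ^ p` exceeds `#N` as `N ≠ 0`.
-/

open PowerSeries

/-- The ring `S = k⟦u⟧` viewed as an algebra over itself via a ring endomorphism
`φ` (so that `S ⊗[φ,S] N` is the Frobenius base change `φ*(N)`). -/
def FrobTwist (k : Type*) [Field k]
    (_φ : PowerSeries k →+* PowerSeries k) : Type _ := PowerSeries k

noncomputable instance (k : Type*) [Field k] (φ : PowerSeries k →+* PowerSeries k) :
    CommRing (FrobTwist k φ) := inferInstanceAs (CommRing (PowerSeries k))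

noncomputable instance (k : Type*) [Field k] (φ : PowerSeries k →+* PowerSeries k) :
    Algebra (PowerSeries k) (FrobTwist k φ) :=
  RingHom.toAlgebra (show PowerSeries k →+* FrobTwist k φ from φ)

namespace PowerSeries

variable {A B : Type*} [CommRing A] [CommRing B]

/-- Since `X ∣ φ X`, `φ` preserves divisibility by `X ^ n`, and every series agrees with a
polynomial modulo `X ^ n`: no continuity assumption is needed. -/
theorem ringHom_ext_of_X_dvd {φ ψ : A⟦X⟧ →+* B⟦X⟧} (hC : ∀ a, φ (C a) = ψ (C a))
    (hX : φ X = ψ X) (hX_dvd : X ∣ φ X) : φ = ψ := by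
  have hpoly : φ.comp Polynomial.coeToPowerSeries.ringHom =
      ψ.comp Polynomial.coeToPowerSeries.ringHom :=
    Polynomial.ringHom_ext (by simpa using hC) (by simpa using hX)
  ext g n
  set t : A⟦X⟧ := (trunc (n + 1) g : A⟦X⟧)
  have ht : φ t = ψ t := congrArg (· (trunc (n + 1) g)) hpoly
  obtain ⟨h, hh⟩ : X ^ (n + 1) ∣ g - t := by
    refine X_pow_dvd_iff.mpr fun m hm => ?_
    rw [map_sub, Polynomial.coeff_coe, coeff_trunc, if_pos hm, sub_self]
  have hdiff : X ^ (n + 1) ∣ φ g - ψ g := by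
    rw [← sub_add_cancel g t, hh, map_add, map_add, ht, map_mul, map_mul, map_pow, map_pow, ← hX,
      add_sub_add_right_eq_sub, ← mul_sub]
    exact (pow_dvd_pow_of_dvd hX_dvd _).mul_right _
  simpa [sub_eq_zero] using X_pow_dvd_iff.mp hdiff n n.lt_succ_self

variable {k : Type*} [CommRing k] (p : ℕ)

structure IsFrobeniusLift (φ : k⟦X⟧ →+* k⟦X⟧) : Prop where
  map_X : φ X = X ^ p
  map_C : ∀ a : k, φ (C a) = C (a ^ p)

variable {p} [ExpChar k p] {φ : k⟦X⟧ →+* k⟦X⟧}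

namespace IsFrobeniusLift

theorem eq_expand_comp_map (hφ : IsFrobeniusLift p φ) :
    φ = (expand p (expChar_pos k p).ne').toRingHom.comp (map (frobenius k p)) := by
  refine ringHom_ext_of_X_dvd (fun a => ?_) ?_ ?_
  · simp [hφ.map_C, expand_C, frobenius_def]
  · simp [hφ.map_X]
  · rw [hφ.map_X]
    exact dvd_pow_self X (expChar_pos k p).ne'

theorem coeff_mul (hφ : IsFrobeniusLift p φ) (g : k⟦X⟧) (q : ℕ) :
    coeff (p * q) (φ g) = coeff q g ^ p := by
  simp [hφ.eq_expand_comp_map, frobenius_def]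

theorem coeff_of_not_dvd (hφ : IsFrobeniusLift p φ) (g : k⟦X⟧) {m : ℕ} (hm : ¬p ∣ m) :
    coeff m (φ g) = 0 := by
  simp [hφ.eq_expand_comp_map, coeff_expand_of_not_dvd _ _ _ hm]

end IsFrobeniusLift

end PowerSeries

namespace Module.Basis

variable {R M N ι : Type*} [CommRing R] [AddCommGroup M] [Module R M] [AddCommGroup N] [Module R N]

theorem card_tensorProduct [Finite ι] (b : Module.Basis ι R M) :
    Nat.card (TensorProduct R M N) = Nat.card N ^ Nat.card ι := by
  classical
  calc Nat.card (TensorProduct R M N) = Nat.card (ι → N) :=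
        Nat.card_congr <| ((TensorProduct.congr b.repr (LinearEquiv.refl R N)).trans
          (TensorProduct.finsuppScalarLeft R N ι)).toEquiv.trans Finsupp.equivFunOnFinite
    _ = Nat.card N ^ Nat.card ι := Nat.card_fun

end Module.Basis

namespace FrobTwist

variable (k : Type*) [Field k] (p : ℕ) [ExpChar k p] (φ : k⟦X⟧ →+* k⟦X⟧)

noncomputable def xPow : Fin p → FrobTwist k φ := fun i => (X ^ (i : ℕ) : k⟦X⟧)

variable {k p φ}

theorem coeff_linearCombination_xPow (hφ : IsFrobeniusLift p φ)
    (g : Fin p →₀ k⟦X⟧) (i : Fin p) (q : ℕ) :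
    coeff (p * q + i) (Finsupp.linearCombination k⟦X⟧ (xPow k p φ) g) = coeff q (g i) ^ p := by
  have hsum : Finsupp.linearCombination k⟦X⟧ (xPow k p φ) g = ∑ j, g j • xPow k p φ j :=
    Finsupp.linearCombination_apply _ _ |>.trans (Finsupp.sum_fintype _ _ fun j => zero_smul _ _)
  rw [hsum]
  -- the scalar action on `FrobTwist k φ` is `s • t = φ s * t`
  change coeff (p * q + i) (∑ j, φ (g j) * X ^ (j : ℕ) : k⟦X⟧) = _
  rw [map_sum, Finset.sum_eq_single i]
  · rw [coeff_mul_X_pow, hφ.coeff_mul]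
  · intro j _ hji
    rw [coeff_mul_X_pow']
    split_ifs with hj
    · refine hφ.coeff_of_not_dvd _ fun ⟨c, hc⟩ => hji (Fin.ext ?_)
      have hmod := congrArg (· % p) (show (j : ℕ) + p * c = i + p * q by omega)
      simpa [Nat.add_mul_mod_self_left, Nat.mod_eq_of_lt] using hmod
    · rfl
  · simp

theorem linearIndependent_xPow (hφ : IsFrobeniusLift p φ) :
    LinearIndependent k⟦X⟧ (xPow k p φ) := by
  intro g g' h
  ext i q
  apply frobenius_inj k p
  simpa only [frobenius_def, ← coeff_linearCombination_xPow hφ] using congrArg (coeff (p * q + i)) h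

theorem span_xPow [PerfectRing k p] (hφ : IsFrobeniusLift p φ) :
    ⊤ ≤ Submodule.span k⟦X⟧ (Set.range (xPow k p φ)) := by
  rw [← Finsupp.range_linearCombination, top_le_iff, LinearMap.range_eq_top]
  intro f
  refine ⟨Finsupp.equivFunOnFinite.symm fun i =>
    mk fun q => (frobeniusEquiv k p).symm (coeff (p * q + i) f), PowerSeries.ext fun n => ?_⟩
  obtain ⟨q, i, rfl⟩ : ∃ q, ∃ i : Fin p, n = p * q + i :=
    ⟨n / p, ⟨n % p, Nat.mod_lt _ (expChar_pos k p)⟩, (Nat.div_add_mod n p).symm⟩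
  rw [coeff_linearCombination_xPow hφ]
  simp [frobeniusEquiv_symm_pow_p]

noncomputable def basis [PerfectRing k p] (hφ : IsFrobeniusLift p φ) :
    Module.Basis (Fin p) k⟦X⟧ (FrobTwist k φ) :=
  .mk (linearIndependent_xPow hφ) (span_xPow hφ)

end FrobTwist

/-- **Lemma (strict length increase under Frobenius pullback).**
Let `k` be a finite field of characteristic `p` and `S = k⟦u⟧`, equipped with the
Frobenius endomorphism `φ` with `φ u = u^p` and `φ a = a^p` on `k`.  For any
nonzero finite-length `S`-module `N` (equivalently, a nonzero finite `S`-module),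
the base change `φ*(N) = S ⊗_{φ,S} N` has strictly greater length as a
`ℤ_p`-module (equivalently `𝔽_p`-dimension, equivalently cardinality) than `N`. -/
theorem frobenius_pullback_length_lt (p : ℕ) [Fact p.Prime]
    (k : Type) [Field k] [Finite k] [CharP k p]
    (φ : PowerSeries k →+* PowerSeries k)
    (hφX : φ PowerSeries.X = PowerSeries.X ^ p)
    (hφC : ∀ a : k, φ (PowerSeries.C a) = PowerSeries.C (a ^ p))
    (N : Type) [AddCommGroup N] [Module (PowerSeries k) N]
    [Finite N] [Nontrivial N] :
    Nat.card N < Nat.card (TensorProduct (PowerSeries k) (FrobTwist k φ) N) := by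
  rw [(FrobTwist.basis ⟨hφX, hφC⟩).card_tensorProduct, Nat.card_fin]
  exact lt_self_pow₀ Finite.one_lt_card (Fact.out : p.Prime).one_lt
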